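/- Suppose there exist C > 1, γ ∈ [0,1) and a current-mode-dependent memory controller Ψ_d such that ‖φ(k, σ, x₀, Ψ_d)‖ ≤ C γ^k ‖x₀‖ for all x₀, σ, k. Then the mode-dependent value function V_d(x₀) = inf over current-mode-dependent memory controllers Ψ' of sup over σ of Σ_{k=0}^∞ ‖φ(k, σ, x₀, Ψ')‖ is a norm on ℝⁿ and satisfies ‖x₀‖ ≤ V_d(x₀) ≤ (C/(1−γ)) ‖x₀‖ for all x₀ ∈ ℝⁿ. -/

import Mathlib

open Matrix Filter ENNReal

noncomputable section

/-- State history `[x(k), …, x(0)]` of the closed loop driven by the reversed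
mode list `[i_{k-1}, …, i_0]`, under a current-mode-dependent memory controller `Ψd`
(which also sees the current mode). -/
def memHistD {n m : ℕ} {S : Type*} (A : S → Matrix (Fin n) (Fin n) ℝ)
    (B : S → Matrix (Fin n) (Fin m) ℝ)
    (Ψd : List (EuclideanSpace ℝ (Fin n)) → List S → EuclideanSpace ℝ (Fin m))
    (x0 : EuclideanSpace ℝ (Fin n)) : List S → List (EuclideanSpace ℝ (Fin n))
  | [] => [x0]
  | i :: is =>
      (WithLp.toLp 2 ((A i).mulVec ((memHistD A B Ψd x0 is).headD 0) +
        (B i).mulVec (Ψd (memHistD A B Ψd x0 is) (i :: is)))) :: memHistD A B Ψd x0 is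

/-- Closed-loop solution `φ(k, σ, x₀, Ψd)` under the switching signal `σ`:
at each step, `Ψd` receives the current and past states `(x(k), …, x(0))`
and the current and past modes `(σ(k), …, σ(0))`. -/
def memTrajD {n m : ℕ} {S : Type*} (A : S → Matrix (Fin n) (Fin n) ℝ)
    (B : S → Matrix (Fin n) (Fin m) ℝ)
    (Ψd : List (EuclideanSpace ℝ (Fin n)) → List S → EuclideanSpace ℝ (Fin m))
    (x0 : EuclideanSpace ℝ (Fin n)) (σ : ℕ → S) (k : ℕ) : EuclideanSpace ℝ (Fin n) :=
  (memHistD A B Ψd x0 (((List.range k).reverse).map σ)).headD 0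

/-- The mode-dependent value function `V_d(x₀) = inf_{Ψd} sup_σ Σₖ ‖φ(k, σ, x₀, Ψd)‖`
(computed in `ℝ≥0∞` and converted to a real number). -/
def valFunD {n m : ℕ} {S : Type*} (A : S → Matrix (Fin n) (Fin n) ℝ)
    (B : S → Matrix (Fin n) (Fin m) ℝ) (x0 : EuclideanSpace ℝ (Fin n)) : ℝ :=
  (⨅ Ψd : List (EuclideanSpace ℝ (Fin n)) → List S → EuclideanSpace ℝ (Fin m),
    ⨆ σ : ℕ → S, ∑' k : ℕ, (‖memTrajD A B Ψd x0 σ k‖₊ : ℝ≥0∞)).toReal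

/-! The value function is an infimum over controllers of worst-case costs. It is subadditive and
homogeneous because controllers can be superposed: a controller may ignore the measured history
and replay the inputs that two given controllers would apply along their own trajectories from
`x` and `y`; by linearity of each mode the resulting trajectory from `x + y` is the sum of the two
trajectories (likewise for scaling). The sandwich comes from the term `k = 0` of the cost, which
is `‖x₀‖`, and from summing the geometric bound of the stabilizing controller; that upper bound
also makes the `ℝ≥0∞`-valued infimum finite, so the real-valued `valFunD` inherits everything. -/

section ValueFunction

variable {n m : ℕ} {S : Type*} (A : S → Matrix (Fin n) (Fin n) ℝ)
  (B : S → Matrix (Fin n) (Fin m) ℝ)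

def worstCaseCost (Ψ : List (EuclideanSpace ℝ (Fin n)) → List S → EuclideanSpace ℝ (Fin m))
    (x0 : EuclideanSpace ℝ (Fin n)) : ℝ≥0∞ :=
  ⨆ σ : ℕ → S, ∑' k : ℕ, (‖memTrajD A B Ψ x0 σ k‖₊ : ℝ≥0∞)

def extValFunD (x0 : EuclideanSpace ℝ (Fin n)) : ℝ≥0∞ :=
  ⨅ Ψ : List (EuclideanSpace ℝ (Fin n)) → List S → EuclideanSpace ℝ (Fin m),
    worstCaseCost A B Ψ x0

theorem valFunD_eq_toReal_extValFunD (x0 : EuclideanSpace ℝ (Fin n)) :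
    valFunD A B x0 = (extValFunD A B x0).toReal :=
  rfl

/-- The list `js` handed to a controller starts with the current mode, so `js.tail` is the past
mode sequence along which `memHistD` reconstructs the history of each replayed trajectory. -/
def sumController (Ψ₁ Ψ₂ : List (EuclideanSpace ℝ (Fin n)) → List S → EuclideanSpace ℝ (Fin m))
    (x y : EuclideanSpace ℝ (Fin n)) :
    List (EuclideanSpace ℝ (Fin n)) → List S → EuclideanSpace ℝ (Fin m) :=
  fun _ js => Ψ₁ (memHistD A B Ψ₁ x js.tail) js + Ψ₂ (memHistD A B Ψ₂ y js.tail) js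

def smulController (c : ℝ)
    (Ψ : List (EuclideanSpace ℝ (Fin n)) → List S → EuclideanSpace ℝ (Fin m))
    (x : EuclideanSpace ℝ (Fin n)) :
    List (EuclideanSpace ℝ (Fin n)) → List S → EuclideanSpace ℝ (Fin m) :=
  fun _ js => c • Ψ (memHistD A B Ψ x js.tail) js

variable (Ψ Ψ₁ Ψ₂ : List (EuclideanSpace ℝ (Fin n)) → List S → EuclideanSpace ℝ (Fin m))

theorem headD_memHistD_sumController (x y : EuclideanSpace ℝ (Fin n)) :
    ∀ is : List S, (memHistD A B (sumController A B Ψ₁ Ψ₂ x y) (x + y) is).headD 0 =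
      (memHistD A B Ψ₁ x is).headD 0 + (memHistD A B Ψ₂ y is).headD 0
  | [] => rfl
  | i :: is => by
    simp only [memHistD, List.headD_cons]
    rw [headD_memHistD_sumController x y is]
    ext j
    simp [sumController, Matrix.mulVec_add]
    ring

theorem headD_memHistD_smulController (c : ℝ) (x : EuclideanSpace ℝ (Fin n)) :
    ∀ is : List S, (memHistD A B (smulController A B c Ψ x) (c • x) is).headD 0 =
      c • (memHistD A B Ψ x is).headD 0
  | [] => rfl
  | i :: is => by
    simp only [memHistD, List.headD_cons]
    rw [headD_memHistD_smulController c x is]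
    ext j
    simp [smulController, Matrix.mulVec_smul]

theorem memTrajD_sumController (x y : EuclideanSpace ℝ (Fin n)) (σ : ℕ → S) (k : ℕ) :
    memTrajD A B (sumController A B Ψ₁ Ψ₂ x y) (x + y) σ k =
      memTrajD A B Ψ₁ x σ k + memTrajD A B Ψ₂ y σ k :=
  headD_memHistD_sumController A B Ψ₁ Ψ₂ x y _

theorem memTrajD_smulController (c : ℝ) (x : EuclideanSpace ℝ (Fin n)) (σ : ℕ → S) (k : ℕ) :
    memTrajD A B (smulController A B c Ψ x) (c • x) σ k = c • memTrajD A B Ψ x σ k :=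
  headD_memHistD_smulController A B Ψ c x _

theorem memTrajD_zero (x0 : EuclideanSpace ℝ (Fin n)) (σ : ℕ → S) :
    memTrajD A B Ψ x0 σ 0 = x0 :=
  rfl

theorem worstCaseCost_sumController_le (x y : EuclideanSpace ℝ (Fin n)) :
    worstCaseCost A B (sumController A B Ψ₁ Ψ₂ x y) (x + y) ≤
      worstCaseCost A B Ψ₁ x + worstCaseCost A B Ψ₂ y := by
  refine iSup_le fun σ => ?_
  calc ∑' k, (‖memTrajD A B (sumController A B Ψ₁ Ψ₂ x y) (x + y) σ k‖₊ : ℝ≥0∞)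
      ≤ ∑' k, ((‖memTrajD A B Ψ₁ x σ k‖₊ : ℝ≥0∞) + ‖memTrajD A B Ψ₂ y σ k‖₊) := by
        refine ENNReal.tsum_le_tsum fun k => ?_
        rw [memTrajD_sumController]
        exact_mod_cast nnnorm_add_le _ _
    _ = ∑' k, (‖memTrajD A B Ψ₁ x σ k‖₊ : ℝ≥0∞) + ∑' k, (‖memTrajD A B Ψ₂ y σ k‖₊ : ℝ≥0∞) :=
        ENNReal.tsum_add
    _ ≤ worstCaseCost A B Ψ₁ x + worstCaseCost A B Ψ₂ y :=
        add_le_add (le_iSup (fun σ => ∑' k, (‖memTrajD A B Ψ₁ x σ k‖₊ : ℝ≥0∞)) σ)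
          (le_iSup (fun σ => ∑' k, (‖memTrajD A B Ψ₂ y σ k‖₊ : ℝ≥0∞)) σ)

theorem worstCaseCost_smulController (c : ℝ) (x : EuclideanSpace ℝ (Fin n)) :
    worstCaseCost A B (smulController A B c Ψ x) (c • x) = ‖c‖₊ * worstCaseCost A B Ψ x := by
  simp only [worstCaseCost, memTrajD_smulController, nnnorm_smul, ENNReal.coe_mul,
    ENNReal.tsum_mul_left, ENNReal.mul_iSup]

theorem nnnorm_le_worstCaseCost [Nonempty S] (x0 : EuclideanSpace ℝ (Fin n)) :
    (‖x0‖₊ : ℝ≥0∞) ≤ worstCaseCost A B Ψ x0 := by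
  let σ : ℕ → S := fun _ => Classical.arbitrary S
  calc (‖x0‖₊ : ℝ≥0∞) = ‖memTrajD A B Ψ x0 σ 0‖₊ := by rw [memTrajD_zero]
    _ ≤ ∑' k, (‖memTrajD A B Ψ x0 σ k‖₊ : ℝ≥0∞) := ENNReal.le_tsum 0
    _ ≤ worstCaseCost A B Ψ x0 := le_iSup (fun σ => ∑' k, (‖memTrajD A B Ψ x0 σ k‖₊ : ℝ≥0∞)) σ

theorem extValFunD_add_le (x y : EuclideanSpace ℝ (Fin n)) :
    extValFunD A B (x + y) ≤ extValFunD A B x + extValFunD A B y := by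
  unfold extValFunD
  rw [ENNReal.iInf_add]
  refine le_iInf fun Ψ₁ => ?_
  rw [ENNReal.add_iInf]
  exact le_iInf fun Ψ₂ =>
    (iInf_le _ _).trans (worstCaseCost_sumController_le A B Ψ₁ Ψ₂ x y)

theorem extValFunD_smul_le (c : ℝ) (x : EuclideanSpace ℝ (Fin n)) :
    extValFunD A B (c • x) ≤ ‖c‖₊ * extValFunD A B x := by
  unfold extValFunD
  rw [ENNReal.mul_iInf fun h => absurd h ENNReal.coe_ne_top]
  exact le_iInf fun Ψ =>
    (iInf_le _ _).trans (worstCaseCost_smulController A B Ψ c x).le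

theorem extValFunD_smul (c : ℝ) (x : EuclideanSpace ℝ (Fin n)) :
    extValFunD A B (c • x) = ‖c‖₊ * extValFunD A B x := by
  refine le_antisymm (extValFunD_smul_le A B c x) ?_
  rcases eq_or_ne c 0 with rfl | hc
  · simp
  calc (‖c‖₊ : ℝ≥0∞) * extValFunD A B x
      = ‖c‖₊ * extValFunD A B (c⁻¹ • c • x) := by rw [inv_smul_smul₀ hc]
    _ ≤ ‖c‖₊ * (‖c⁻¹‖₊ * extValFunD A B (c • x)) := by gcongr; exact extValFunD_smul_le A B _ _
    _ = extValFunD A B (c • x) := by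
        rw [← mul_assoc, ← ENNReal.coe_mul, ← nnnorm_mul, mul_inv_cancel₀ hc, nnnorm_one,
          ENNReal.coe_one, one_mul]

theorem tsum_nnnorm_le_ofReal_of_le_geometric {E : Type*} [SeminormedAddCommGroup E]
    {f : ℕ → E} {a γ : ℝ} (hγ0 : 0 ≤ γ) (hγ1 : γ < 1) (hf : ∀ k, ‖f k‖ ≤ a * γ ^ k) :
    ∑' k, (‖f k‖₊ : ℝ≥0∞) ≤ ENNReal.ofReal (a / (1 - γ)) := by
  have ha : 0 ≤ a := by simpa using (norm_nonneg _).trans (hf 0)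
  have hsum : HasSum (fun k => a * γ ^ k) (a / (1 - γ)) := by
    simpa [div_eq_mul_inv] using (hasSum_geometric_of_lt_one hγ0 hγ1).mul_left a
  rw [← hsum.tsum_eq, ENNReal.ofReal_tsum_of_nonneg (fun k => by positivity) hsum.summable]
  refine ENNReal.tsum_le_tsum fun k => ?_
  rw [← enorm_eq_nnnorm, ← ofReal_norm]
  exact ENNReal.ofReal_le_ofReal (hf k)

theorem extValFunD_le_of_norm_memTrajD_le {C γ : ℝ} (hγ0 : 0 ≤ γ) (hγ1 : γ < 1)
    (hΨ : ∀ (x0 : EuclideanSpace ℝ (Fin n)) (σ : ℕ → S) (k : ℕ),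
      ‖memTrajD A B Ψ x0 σ k‖ ≤ C * γ ^ k * ‖x0‖) (x0 : EuclideanSpace ℝ (Fin n)) :
    extValFunD A B x0 ≤ ENNReal.ofReal (C / (1 - γ) * ‖x0‖) := by
  refine (iInf_le _ Ψ).trans (iSup_le fun σ => ?_)
  rw [div_mul_eq_mul_div]
  refine tsum_nnnorm_le_ofReal_of_le_geometric hγ0 hγ1 fun k => ?_
  linarith [hΨ x0 σ k, mul_right_comm C (γ ^ k) ‖x0‖]

theorem valFunD_smul (c : ℝ) (x : EuclideanSpace ℝ (Fin n)) :
    valFunD A B (c • x) = |c| * valFunD A B x := by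
  simp [valFunD_eq_toReal_extValFunD, extValFunD_smul]

theorem valFunD_add_le {x y : EuclideanSpace ℝ (Fin n)} (hx : extValFunD A B x ≠ ⊤)
    (hy : extValFunD A B y ≠ ⊤) : valFunD A B (x + y) ≤ valFunD A B x + valFunD A B y := by
  simp only [valFunD_eq_toReal_extValFunD]
  rw [← ENNReal.toReal_add hx hy]
  exact ENNReal.toReal_mono (ENNReal.add_ne_top.2 ⟨hx, hy⟩) (extValFunD_add_le A B x y)

theorem norm_le_valFunD [Nonempty S] {x : EuclideanSpace ℝ (Fin n)}
    (hx : extValFunD A B x ≠ ⊤) : ‖x‖ ≤ valFunD A B x := by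
  have := ENNReal.toReal_mono hx (le_iInf fun Ψ => nnnorm_le_worstCaseCost A B Ψ x)
  simpa [valFunD_eq_toReal_extValFunD] using this

end ValueFunction

theorem valFunD_norm_sandwich_general {n m : ℕ} {S : Type*} [Nonempty S]
    (A : S → Matrix (Fin n) (Fin n) ℝ) (B : S → Matrix (Fin n) (Fin m) ℝ)
    (C γ : ℝ) (hC : 1 < C) (hγ : γ ∈ Set.Ico (0 : ℝ) 1)
    (Ψd : List (EuclideanSpace ℝ (Fin n)) → List S → EuclideanSpace ℝ (Fin m))
    (hΨd : ∀ (x0 : EuclideanSpace ℝ (Fin n)) (σ : ℕ → S) (k : ℕ),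
      ‖memTrajD A B Ψd x0 σ k‖ ≤ C * γ ^ k * ‖x0‖) :
    ((valFunD A B (0 : EuclideanSpace ℝ (Fin n)) = 0 ∧
        ∀ x : EuclideanSpace ℝ (Fin n), x ≠ 0 → 0 < valFunD A B x) ∧
      (∀ (lam : ℝ) (x : EuclideanSpace ℝ (Fin n)),
        valFunD A B (lam • x) = |lam| * valFunD A B x) ∧
      (∀ x y : EuclideanSpace ℝ (Fin n),
        valFunD A B (x + y) ≤ valFunD A B x + valFunD A B y)) ∧
    (∀ x0 : EuclideanSpace ℝ (Fin n),
      ‖x0‖ ≤ valFunD A B x0 ∧ valFunD A B x0 ≤ C / (1 - γ) * ‖x0‖) := by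
  obtain ⟨hγ0, hγ1⟩ := hγ
  have hupper := extValFunD_le_of_norm_memTrajD_le A B Ψd hγ0 hγ1 hΨd
  have hfin (x) : extValFunD A B x ≠ ⊤ := ne_top_of_le_ne_top ENNReal.ofReal_ne_top (hupper x)
  have hzero : valFunD A B (0 : EuclideanSpace ℝ (Fin n)) = 0 := by
    simpa using valFunD_smul A B 0 (0 : EuclideanSpace ℝ (Fin n))
  refine ⟨⟨⟨hzero, fun x hx => (norm_pos_iff.2 hx).trans_le (norm_le_valFunD A B (hfin x))⟩,
    valFunD_smul A B, fun x y => valFunD_add_le A B (hfin x) (hfin y)⟩,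
    fun x => ⟨norm_le_valFunD A B (hfin x), ?_⟩⟩
  have hCγ : 0 ≤ C / (1 - γ) := div_nonneg (by linarith) (by linarith)
  exact ENNReal.toReal_le_of_le_ofReal (mul_nonneg hCγ (norm_nonneg x)) (hupper x)

/-- Under exponential stabilizability by a current-mode-dependent
memory controller, the mode-dependent value function is a norm on `ℝⁿ` and is
sandwiched between `‖x₀‖` and `(C/(1-γ))‖x₀‖`. -/
theorem valFunD_norm_sandwich {n m : ℕ} (hn : 0 < n) (hm : 0 < m) {S : Type*} [Fintype S] [Nonempty S]
    (A : S → Matrix (Fin n) (Fin n) ℝ) (B : S → Matrix (Fin n) (Fin m) ℝ)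
    (C γ : ℝ) (hC : 1 < C) (hγ : γ ∈ Set.Ico (0 : ℝ) 1)
    (Ψd : List (EuclideanSpace ℝ (Fin n)) → List S → EuclideanSpace ℝ (Fin m))
    (hΨd : ∀ (x0 : EuclideanSpace ℝ (Fin n)) (σ : ℕ → S) (k : ℕ),
      ‖memTrajD A B Ψd x0 σ k‖ ≤ C * γ ^ k * ‖x0‖) :
    ((valFunD A B (0 : EuclideanSpace ℝ (Fin n)) = 0 ∧
        ∀ x : EuclideanSpace ℝ (Fin n), x ≠ 0 → 0 < valFunD A B x) ∧
      (∀ (lam : ℝ) (x : EuclideanSpace ℝ (Fin n)),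
        valFunD A B (lam • x) = |lam| * valFunD A B x) ∧
      (∀ x y : EuclideanSpace ℝ (Fin n),
        valFunD A B (x + y) ≤ valFunD A B x + valFunD A B y)) ∧
    (∀ x0 : EuclideanSpace ℝ (Fin n),
      ‖x0‖ ≤ valFunD A B x0 ∧ valFunD A B x0 ≤ C / (1 - γ) * ‖x0‖) :=
  valFunD_norm_sandwich_general A B C γ hC hγ Ψd hΨd
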